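/- Let U ⊆ ℝ³ be open, F : U → ℝ twice continuously differentiable, and λ : U → ℝ differentiable with F_a + F_b·λ + F_c·λ² = 0 identically on U. Then at every point p ∈ U where F_b(p) + 2·F_c(p)·λ(p) ≠ 0, one has the identity (λ_a + λ·λ_b + λ²·λ_c)(p) · (F_b + 2·F_c·λ)(p) = −[ F_aa + 2·F_ab·λ + (2·F_ac + F_bb)·λ² + 2·F_bc·λ³ + F_cc·λ⁴ ](p). In particular, λ_a + λ·λ_b + λ²·λ_c vanishes at p if and only if the quartic S²(F) vanishes at the root (1, λ(p)) of the symbol. -/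

import Mathlib

/-- The partial derivative of `G : ℝ³ → ℝ` in the constant direction `v`. -/
noncomputable def pd (v : ℝ × ℝ × ℝ) (G : ℝ × ℝ × ℝ → ℝ) : ℝ × ℝ × ℝ → ℝ :=
  fun p => fderiv ℝ G p v

/-- Direction of the variable `a`. -/
def ea : ℝ × ℝ × ℝ := (1, 0, 0)
/-- Direction of the variable `b`. -/
def eb : ℝ × ℝ × ℝ := (0, 1, 0)
/-- Direction of the variable `c`. -/
def ec : ℝ × ℝ × ℝ := (0, 0, 1)

/-!
Differentiate the characteristic equation `F_a + F_b λ + F_c λ² = 0` in the directions `a`, `b`,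
`c` and combine the three results with weights `1, λ, λ²`. Using the symmetry of the Hessian of
`F`, the second derivatives of `F` assemble into `S²(F)(1, λ)`, and the derivatives of `λ` into
`(λ_a + λ λ_b + λ² λ_c)(F_b + 2 F_c λ)`.
-/

open Filter Topology

lemma ContDiffAt.differentiableAt_fderiv {𝕜 E F : Type*} [NontriviallyNormedField 𝕜]
    [NormedAddCommGroup E] [NormedSpace 𝕜 E] [NormedAddCommGroup F] [NormedSpace 𝕜 F]
    {f : E → F} {x : E} {n : WithTop ℕ∞} (hf : ContDiffAt 𝕜 n f x) (hn : 2 ≤ n) :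
    DifferentiableAt 𝕜 (fderiv 𝕜 f) x :=
  (hf.fderiv_right (m := 1) hn).differentiableAt one_ne_zero

section PartialDerivative

variable {F G : ℝ × ℝ × ℝ → ℝ} {p : ℝ × ℝ × ℝ}

lemma pd_fun_add (hF : DifferentiableAt ℝ F p) (hG : DifferentiableAt ℝ G p)
    (v : ℝ × ℝ × ℝ) : pd v (fun q => F q + G q) p = pd v F p + pd v G p := by
  simp [pd, fderiv_fun_add hF hG]

lemma pd_fun_mul (hF : DifferentiableAt ℝ F p) (hG : DifferentiableAt ℝ G p)
    (v : ℝ × ℝ × ℝ) : pd v (fun q => F q * G q) p = pd v F p * G p + F p * pd v G p := by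
  simp only [pd, fderiv_fun_mul hF hG, add_apply, smul_apply, smul_eq_mul]
  ring

lemma pd_fun_pow (hF : DifferentiableAt ℝ F p) (n : ℕ) (v : ℝ × ℝ × ℝ) :
    pd v (fun q => F q ^ n) p = n * F p ^ (n - 1) * pd v F p := by
  simp [pd, fderiv_fun_pow n hF, mul_assoc]

lemma pd_eq_zero_of_eventuallyEq_zero (hF : F =ᶠ[𝓝 p] 0) (v : ℝ × ℝ × ℝ) : pd v F p = 0 := by
  simp [pd, hF.fderiv_eq]

lemma pd_pd_eq_fderiv_fderiv (hF : DifferentiableAt ℝ (fderiv ℝ F) p) (v w : ℝ × ℝ × ℝ) :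
    pd v (pd w F) p = fderiv ℝ (fderiv ℝ F) p v w := by
  have h := (ContinuousLinearMap.apply ℝ ℝ w).hasFDerivAt.comp p hF.hasFDerivAt
  exact congrArg (· v) h.fderiv

lemma differentiableAt_pd (hF : DifferentiableAt ℝ (fderiv ℝ F) p) (w : ℝ × ℝ × ℝ) :
    DifferentiableAt ℝ (pd w F) p :=
  (ContinuousLinearMap.apply ℝ ℝ w).differentiableAt.comp p hF

lemma pd_pd_comm (hF : ContDiffAt ℝ 2 F p) (v w : ℝ × ℝ × ℝ) :
    pd v (pd w F) p = pd w (pd v F) p := by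
  have hF' := hF.differentiableAt_fderiv le_rfl
  rw [pd_pd_eq_fderiv_fderiv hF' v w, pd_pd_eq_fderiv_fderiv hF' w v]
  exact (hF.isSymmSndFDerivAt (by simp)).eq v w

end PartialDerivative

section CharacteristicSpeed

variable {F lam : ℝ × ℝ × ℝ → ℝ} {p : ℝ × ℝ × ℝ}

lemma pd_characteristic_eq_zero (hF : DifferentiableAt ℝ (fderiv ℝ F) p)
    (hlam : DifferentiableAt ℝ lam p)
    (hchar : ∀ᶠ q in 𝓝 p, pd ea F q + pd eb F q * lam q + pd ec F q * lam q ^ 2 = 0)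
    (v : ℝ × ℝ × ℝ) :
    pd v (pd ea F) p + pd v (pd eb F) p * lam p + pd eb F p * pd v lam p +
      pd v (pd ec F) p * lam p ^ 2 + 2 * pd ec F p * lam p * pd v lam p = 0 := by
  have hA := differentiableAt_pd hF ea
  have hB := differentiableAt_pd hF eb
  have hC := differentiableAt_pd hF ec
  have h := pd_eq_zero_of_eventuallyEq_zero hchar v
  simp (disch := fun_prop) only [pd_fun_add, pd_fun_mul, pd_fun_pow] at h
  linear_combination h

theorem lax_mul_eq_neg_secondSymbol (hF : ContDiffAt ℝ 2 F p) (hlam : DifferentiableAt ℝ lam p)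
    (hchar : ∀ᶠ q in 𝓝 p, pd ea F q + pd eb F q * lam q + pd ec F q * lam q ^ 2 = 0) :
    (pd ea lam p + lam p * pd eb lam p + lam p ^ 2 * pd ec lam p) *
        (pd eb F p + 2 * pd ec F p * lam p) =
      -(pd ea (pd ea F) p + 2 * pd eb (pd ea F) p * lam p +
        (2 * pd ec (pd ea F) p + pd eb (pd eb F) p) * lam p ^ 2 +
        2 * pd ec (pd eb F) p * lam p ^ 3 + pd ec (pd ec F) p * lam p ^ 4) := by
  have hF' := hF.differentiableAt_fderiv le_rfl
  have ha := pd_characteristic_eq_zero hF' hlam hchar ea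
  have hb := pd_characteristic_eq_zero hF' hlam hchar eb
  have hc := pd_characteristic_eq_zero hF' hlam hchar ec
  linear_combination ha + lam p * hb + lam p ^ 2 * hc - lam p * pd_pd_comm hF ea eb -
    lam p ^ 2 * pd_pd_comm hF ea ec - lam p ^ 3 * pd_pd_comm hF eb ec

end CharacteristicSpeed

/-- If `λ` is a characteristic speed of `F` (i.e. `F_a + F_b λ + F_c λ² = 0` on `U`),
then at any point where `F_b + 2 F_c λ ≠ 0`,
`(λ_a + λ λ_b + λ² λ_c) (F_b + 2 F_c λ) = −S²(F)(1, λ)`.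
In particular Lax's condition holds at `p` iff the quartic `S²(F)` vanishes at `(1, λ(p))`. -/
theorem lax_condition_eq_second_symbol
    (U : Set (ℝ × ℝ × ℝ)) (hU : IsOpen U)
    (F lam : ℝ × ℝ × ℝ → ℝ)
    (hF : ContDiffOn ℝ 2 F U) (hlam : DifferentiableOn ℝ lam U)
    (hchar : ∀ q ∈ U, pd ea F q + pd eb F q * lam q + pd ec F q * lam q ^ 2 = 0)
    (p : ℝ × ℝ × ℝ) (hp : p ∈ U)
    (hnd : pd eb F p + 2 * pd ec F p * lam p ≠ 0) :
    (pd ea lam p + lam p * pd eb lam p + lam p ^ 2 * pd ec lam p) *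
        (pd eb F p + 2 * pd ec F p * lam p) =
      -(pd ea (pd ea F) p + 2 * pd eb (pd ea F) p * lam p +
        (2 * pd ec (pd ea F) p + pd eb (pd eb F) p) * lam p ^ 2 +
        2 * pd ec (pd eb F) p * lam p ^ 3 + pd ec (pd ec F) p * lam p ^ 4) ∧
    ((pd ea lam p + lam p * pd eb lam p + lam p ^ 2 * pd ec lam p = 0) ↔
      pd ea (pd ea F) p + 2 * pd eb (pd ea F) p * lam p +
        (2 * pd ec (pd ea F) p + pd eb (pd eb F) p) * lam p ^ 2 +
        2 * pd ec (pd eb F) p * lam p ^ 3 + pd ec (pd ec F) p * lam p ^ 4 = 0) := by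
  have hU_nhds := hU.mem_nhds hp
  have hlax := lax_mul_eq_neg_secondSymbol (hF.contDiffAt hU_nhds)
    ((hlam p hp).differentiableAt hU_nhds) (eventually_of_mem hU_nhds hchar)
  refine ⟨hlax, ?_⟩
  rw [← mul_left_inj' hnd, zero_mul, hlax, neg_eq_zero]
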